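/- Define f : ω × ω → ω by f(a, b) = b if a = b, f(a, b) = max(a,b) − 1 if a ≠ b. Then for every orderly term F built from f and every finite subsequence σ of ⟨0,1,2,...⟩ with first term N and last term M (N < M), one has N ≤ F(σ) < M. -/

import Mathlib

namespace RamseyAlg

/- Orderly-term syntax trees over an operation-index type `ι`:
`leaf` is the identity (a single variable), `node g f` applies the basic
operation `g` to the results of the trees in the forest `f`. -/
mutual
  inductive OTree (ι : Type) : Type
    | leaf : OTree ι
    | node : ι → OForest ι → OTree ι
  inductive OForest (ι : Type) : Type
    | nil : OForest ι
    | cons : OTree ι → OForest ι → OForest ι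
end

def OForest.length {ι : Type} : OForest ι → ℕ
  | .nil => 0
  | .cons _ f => f.length + 1

/- Well-formedness: each node applies a `k`-ary basic operation to exactly
`k` subtrees, where `ar` gives the arities. -/
mutual
  def OTree.WF {ι : Type} (ar : ι → ℕ) : OTree ι → Prop
    | .leaf => True
    | .node g f => OForest.length f = ar g ∧ OForest.WF ar f
  def OForest.WF {ι : Type} (ar : ι → ℕ) : OForest ι → Prop
    | .nil => True
    | .cons t f => OTree.WF ar t ∧ OForest.WF ar f
end

/- Evaluation of an orderly term on an input list: the variables of the term
consume an initial segment of the list, in order, each exactly once; what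
remains of the list is returned alongside the value. -/
mutual
  def OTree.evalAux {ι A : Type} (F : ι → List A → A) :
      OTree ι → List A → Option (A × List A)
    | .leaf, [] => none
    | .leaf, a :: rest => some (a, rest)
    | .node g f, l =>
      match OForest.evalAux F f l with
      | none => none
      | some (rs, rest) => some (F g rs, rest)
  def OForest.evalAux {ι A : Type} (F : ι → List A → A) :
      OForest ι → List A → Option (List A × List A)
    | .nil, l => some ([], l)
    | .cons t f, l =>
      match OTree.evalAux F t l with
      | none => none
      | some (r, rest) =>
        match OForest.evalAux F f rest with
        | none => none
        | some (rs, rest') => some (r :: rs, rest')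
end

/- The value of the orderly term `t` on the finite sequence `l`, defined
exactly when the variables of `t` consume all of `l`. -/
def OTree.eval {ι A : Type} (F : ι → List A → A) (t : OTree ι) (l : List A) :
    Option A :=
  match OTree.evalAux F t l with
  | some (a, []) => some a
  | _ => none

/- `Reduction ar F a b` : `a` is a reduction of `b` with respect to `F`, i.e.
there are well-formed orderly terms `t j` applied to consecutive disjoint
finite subsequences of `b` (extracted by the strictly monotone `e`, in blocks
of lengths `len j`) producing the terms of `a` in order. -/
def Reduction {ι A : Type} (ar : ι → ℕ) (F : ι → List A → A)
    (a b : ℕ → A) : Prop :=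
  ∃ (t : ℕ → OTree ι) (len : ℕ → ℕ) (e : ℕ → ℕ),
    StrictMono e ∧ (∀ j, (t j).WF ar) ∧
    ∀ j, (t j).eval F ((List.range (len j)).map
        (fun i => b (e ((∑ m ∈ Finset.range j, len m) + i)))) = some (a j)

/- `FR ar F b` : the set of values of orderly terms over `F` applied to
finite subsequences of `b`. -/
def FR {ι A : Type} (ar : ι → ℕ) (F : ι → List A → A) (b : ℕ → A) : Set A :=
  { x | ∃ (t : OTree ι) (l : List ℕ), t.WF ar ∧ l.Chain' (· < ·) ∧
      t.eval F (l.map b) = some x }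

/- `(A, F)` is a Ramsey algebra: every infinite sequence has, for every
`X ⊆ A`, a reduction homogeneous for `X`. -/
def RamseyAlgebra {ι A : Type} (ar : ι → ℕ) (F : ι → List A → A) : Prop :=
  ∀ (b : ℕ → A) (X : Set A), ∃ a : ℕ → A,
    Reduction ar F a b ∧ (FR ar F a ⊆ X ∨ FR ar F a ∩ X = ∅)

end RamseyAlg


open RamseyAlg in
/-- The binary operation of the direct-limit algebra: `f a a = a` and
`f a b = max a b - 1` for `a ≠ b`; as a list-operation over a one-symbol
binary signature. -/
def dlop : Unit → List ℕ → ℕ :=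
  fun _ l =>
    match l with
    | [a, b] => if a = b then a else max a b - 1
    | _ => 0

open RamseyAlg in
theorem key18 : ∀ n : ℕ, ∀ t : OTree Unit, sizeOf t ≤ n → t.WF (fun _ => 2) →
    ∀ l : List ℕ, l.Chain' (· < ·) →
    ∀ v rest, OTree.evalAux dlop t l = some (v, rest) →
    ∃ c N' M', l = c ++ rest ∧ c.head? = some N' ∧ c.getLast? = some M' ∧
      N' ≤ v ∧ v ≤ M' ∧ (t ≠ .leaf → v < M') := by
  intro n
  induction n with
  | zero => intro t ht; cases t <;> simp at ht
  | succ n ih =>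
    intro t ht hwf l hl v rest hev
    cases t with
    | leaf =>
      cases l with
      | nil => simp [OTree.evalAux] at hev
      | cons a l' =>
        rw [OTree.evalAux] at hev
        simp at hev
        obtain ⟨rfl, rfl⟩ := hev
        exact ⟨[a], a, a, by simp, by simp, by simp, le_refl a, le_refl a,
          fun h => absurd rfl h⟩
    | node g f =>
      rw [OTree.WF] at hwf
      obtain ⟨hlen, hwff⟩ := hwf
      match f with
      | .nil => simp [OForest.length] at hlen
      | .cons _ .nil => simp [OForest.length] at hlen
      | .cons _ (.cons _ (.cons _ _)) => simp [OForest.length] at hlen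
      | .cons t1 (.cons t2 .nil) =>
        rw [OForest.WF] at hwff
        obtain ⟨hwf1, hwff⟩ := hwff
        rw [OForest.WF] at hwff
        obtain ⟨hwf2, -⟩ := hwff
        rw [OTree.evalAux, OForest.evalAux] at hev
        cases h1 : OTree.evalAux dlop t1 l with
        | none => rw [h1] at hev; simp at hev
        | some p1 =>
          obtain ⟨v1, rest1⟩ := p1
          rw [h1] at hev
          simp only [OForest.evalAux] at hev
          cases h2 : OTree.evalAux dlop t2 rest1 with
          | none => rw [h2] at hev; simp at hev
          | some p2 =>
            obtain ⟨v2, rest2⟩ := p2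
            rw [h2] at hev
            simp only [OForest.evalAux] at hev
            simp at hev
            obtain ⟨rfl, rfl⟩ := hev
            have ht1 : sizeOf t1 ≤ n := by
              have := ht; simp at this; omega
            have ht2 : sizeOf t2 ≤ n := by
              have := ht; simp at this; omega
            obtain ⟨c1, N1, M1, hc1, hh1, hg1, hN1, hM1, -⟩ :=
              ih t1 ht1 hwf1 l hl v1 rest1 h1
            have hrest1 : rest1.Chain' (· < ·) := by
              rw [hc1] at hl; replace hl := List.isChain_append.mp hl
              exact hl.2.1
            obtain ⟨c2, N2, M2, hc2, hh2, hg2, hN2, hM2, -⟩ :=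
              ih t2 ht2 hwf2 rest1 hrest1 v2 rest2 h2
            have hc1ne : c1 ≠ [] := by
              intro h; rw [h] at hh1; simp at hh1
            have hc2ne : c2 ≠ [] := by
              intro h; rw [h] at hh2; simp at hh2
            have hM1N2 : M1 < N2 := by
              rw [hc1, hc2] at hl; replace hl := List.isChain_append.mp hl
              exact hl.2.2 M1 hg1 N2 (by rw [List.head?_append_of_ne_nil _ hc2ne]; exact hh2)
            have hv12 : v1 < v2 := lt_of_le_of_lt hM1 (lt_of_lt_of_le hM1N2 hN2)
            have hval : dlop g [v1, v2] = v2 - 1 := by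
              simp [dlop, Nat.ne_of_lt hv12, Nat.max_eq_right (le_of_lt hv12)]
            refine ⟨c1 ++ c2, N1, M2, ?_, ?_, ?_, ?_, ?_, ?_⟩
            · rw [hc1, hc2, List.append_assoc]
            · rw [List.head?_append_of_ne_nil _ hc1ne]; exact hh1
            · rw [List.getLast?_append_of_ne_nil _ hc2ne]; exact hg2
            · rw [hval]; omega
            · rw [hval]; omega
            · intro _; rw [hval]; omega

open RamseyAlg in
/-- For every orderly term `t` built from `f` (with `f a a = a`,
`f a b = max a b - 1` for `a ≠ b`) and every strictly increasing finite sequence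
`l` of naturals with first term `N` and last term `M` (so `N < M` when
`2 ≤ l.length`), the value of `t` on `l` satisfies `N ≤ t(l) < M`. -/
theorem stmt18 :
    ∀ t : OTree Unit, t.WF (fun _ => 2) →
    ∀ l : List ℕ, l.Chain' (· < ·) → 2 ≤ l.length →
    ∀ (v N M : ℕ), t.eval dlop l = some v →
      l.head? = some N → l.getLast? = some M → N ≤ v ∧ v < M := by
  intro t hwf l hl hlen v N M hev hN hM
  rw [OTree.eval] at hev
  cases haux : OTree.evalAux dlop t l with
  | none => rw [haux] at hev; simp at hev
  | some p =>
    obtain ⟨v', rest⟩ := p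
    rw [haux] at hev
    cases rest with
    | cons a r => simp at hev
    | nil =>
      simp at hev
      subst hev
      obtain ⟨c, N', M', hc, hh, hg, hN', hM', hne⟩ :=
        key18 (sizeOf t) t le_rfl hwf l hl _ [] haux
      rw [List.append_nil] at hc
      subst hc
      rw [hh] at hN
      rw [hg] at hM
      obtain rfl : N' = N := Option.some.inj hN
      obtain rfl : M' = M := Option.some.inj hM
      have htne : t ≠ .leaf := by
        intro h
        subst h
        match l, hlen with
        | a :: b :: l', _ =>
          rw [OTree.evalAux] at haux
          simp at haux
      exact ⟨hN', hne htne⟩
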